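/- arXiv:1003.1695 — 5 statements merged into one kernel-verified Lean document; each statement's English description precedes it below -/
import Mathlib

section
/- Let (n_k) be a sequence of positive integers with n_0 = 1 and n_k^3 ≤ n_{k+1} ≤ n_k^{3m} for a fixed integer m ≥ 2, and let n_1 > 1. Define a_v(i) as the least nonnegative residue of i mod n_v and d_i = Σ_{v=1}^∞ a_v(i)/(n_{v-1}^2 n_v). Then for all integers i_1 ≠ i_2, one has |d_{i_1} − d_{i_2}| ≥ (2/3)·max(n_1, |i_1 − i_2|)^{−(3m+1)}. In particular, d is a distal sequence. -/
/-!
Let `N + 1` be the first level at which `i₁` and `i₂` have different residues. The earlier terms of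
`d_{i₁} - d_{i₂}` cancel, the term of level `N + 1` is `δ / (n_N² n_{N+1})` with
`δ = a_{N+1}(i₁) - a_{N+1}(i₂) ≠ 0`, and since `n` grows at least like `x ↦ x³` the remaining tail
is at most `(16/15) / n_{N+1}²`. As `n_N ∣ i₁ - i₂` we have `n_N ≤ |i₁ - i₂|`, and as
`δ ≡ i₁ - i₂ [ZMOD n_{N+1}]`, either `δ = i₁ - i₂`, and then `n_{N+1} ≤ n_N^{3m}` bounds
`n_N n_{N+1}`, or `n_{N+1} ≤ |δ| + |i₁ - i₂|`, so that `|δ|` or `|i₁ - i₂|` is at least `n_{N+1} / 2`.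
-/

lemma Int.ModEq.abs_le_abs_sub {a b c : ℤ} (h : a ≡ b [ZMOD c]) (hne : a ≠ b) : |c| ≤ |a - b| := by
  rw [abs_sub_comm, Int.abs_eq_natAbs, Int.abs_eq_natAbs]
  exact_mod_cast Int.natAbs_le_of_dvd_ne_zero h.dvd (sub_ne_zero.2 hne.symm)

lemma Int.ModEq.eq_or_abs_le_abs_add_abs {a b c : ℤ} (h : a ≡ b [ZMOD c]) :
    a = b ∨ |c| ≤ |a| + |b| :=
  or_iff_not_imp_left.2 fun hne => (h.abs_le_abs_sub hne).trans (abs_sub a b)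

lemma tsum_eq_add_tsum_nat_add_of_eq_zero {G : Type*} [AddCommGroup G] [TopologicalSpace G]
    [IsTopologicalAddGroup G] [T2Space G] {f : ℕ → G} (hf : Summable f) {N : ℕ}
    (hzero : ∀ v < N, f v = 0) : ∑' v, f v = f N + ∑' j, f (j + (N + 1)) := by
  rw [← hf.sum_add_tsum_nat_add (N + 1), Finset.sum_range_succ,
    Finset.sum_eq_zero fun v hv => hzero v (Finset.mem_range.1 hv), zero_add]

structure IsCubicGrowth (n : ℕ → ℕ) : Prop where
  zero : n 0 = 1
  one_lt : 1 < n 1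
  pow_three_le : ∀ k, n k ^ 3 ≤ n (k + 1)

namespace IsCubicGrowth

variable {n : ℕ → ℕ}

lemma pos (hn : IsCubicGrowth n) : ∀ v, 0 < n v
  | 0 => by simp [hn.zero]
  | v + 1 => (pow_pos (hn.pos v) 3).trans_le (hn.pow_three_le v)

lemma two_le (hn : IsCubicGrowth n) : ∀ {v}, 1 ≤ v → 2 ≤ n v
  | 1, _ => hn.one_lt
  | v + 2, _ => (hn.two_le (Nat.le_add_left 1 v)).trans
      ((Nat.le_self_pow three_ne_zero _).trans (hn.pow_three_le (v + 1)))

lemma two_mul_sq_le (hn : IsCubicGrowth n) (v : ℕ) : 2 * n v ^ 2 ≤ n (v + 1) := by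
  rcases Nat.eq_zero_or_pos v with rfl | hv
  · simpa [hn.zero, Nat.succ_le_iff] using hn.one_lt
  · calc 2 * n v ^ 2 ≤ n v * n v ^ 2 := Nat.mul_le_mul_right _ (hn.two_le hv)
      _ = n v ^ 3 := by ring
      _ ≤ n (v + 1) := hn.pow_three_le v

lemma four_mul_le (hn : IsCubicGrowth n) {v : ℕ} (hv : 1 ≤ v) : 4 * n v ≤ n (v + 1) :=
  calc 4 * n v ≤ n v ^ 2 * n v := Nat.mul_le_mul_right _ (by nlinarith [hn.two_le hv])
    _ = n v ^ 3 := by ring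
    _ ≤ n (v + 1) := hn.pow_three_le v

lemma mul_four_pow_le (hn : IsCubicGrowth n) {v : ℕ} (hv : 1 ≤ v) : ∀ j, n v * 4 ^ j ≤ n (j + v)
  | 0 => by simp
  | j + 1 =>
    calc n v * 4 ^ (j + 1) = 4 * (n v * 4 ^ j) := by ring
      _ ≤ 4 * n (j + v) := Nat.mul_le_mul_left 4 (hn.mul_four_pow_le hv j)
      _ ≤ n (j + v + 1) := hn.four_mul_le (by omega)
      _ = n (j + 1 + v) := by rw [Nat.add_right_comm]

lemma lt_apply_succ (hn : IsCubicGrowth n) (j : ℕ) : j < n (j + 1) :=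
  calc j < 4 ^ j := Nat.lt_pow_self (by norm_num)
    _ ≤ n 1 * 4 ^ j := Nat.le_mul_of_pos_left _ (hn.pos 1)
    _ ≤ n (j + 1) := hn.mul_four_pow_le le_rfl j

lemma inv_sq_apply_add_le (hn : IsCubicGrowth n) {v : ℕ} (hv : 1 ≤ v) (j : ℕ) :
    ((n (j + v) : ℝ) ^ 2)⁻¹ ≤ ((n v : ℝ) ^ 2)⁻¹ * (1 / 16) ^ j := by
  have hpos : (0 : ℝ) < n v := by exact_mod_cast hn.pos v
  have hgrow : (n v : ℝ) * 4 ^ j ≤ n (j + v) := by exact_mod_cast hn.mul_four_pow_le hv j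
  calc ((n (j + v) : ℝ) ^ 2)⁻¹ ≤ (((n v : ℝ) * 4 ^ j) ^ 2)⁻¹ := by gcongr
    _ = ((n v : ℝ) ^ 2)⁻¹ * (1 / 16) ^ j := by
      rw [mul_pow, ← pow_mul, mul_comm j, pow_mul, mul_inv, one_div, inv_pow]
      norm_num

lemma summable_of_abs_le (hn : IsCubicGrowth n) {f : ℕ → ℝ}
    (hf : ∀ v, |f v| ≤ ((n v : ℝ) ^ 2)⁻¹) : Summable f := by
  rw [← summable_nat_add_iff 1]
  exact ((summable_geometric_of_lt_one (by norm_num) (by norm_num)).mul_left _).of_norm_bounded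
    fun j => (hf _).trans (hn.inv_sq_apply_add_le le_rfl j)

lemma abs_tsum_nat_add_le (hn : IsCubicGrowth n) {f : ℕ → ℝ}
    (hf : ∀ v, |f v| ≤ ((n v : ℝ) ^ 2)⁻¹) {v : ℕ} (hv : 1 ≤ v) :
    |∑' j, f (j + v)| ≤ 16 / 15 / (n v : ℝ) ^ 2 := by
  have hgeom := (hasSum_geometric_of_lt_one (r := 1 / 16) (by norm_num) (by norm_num)).mul_left
    ((n v : ℝ) ^ 2)⁻¹
  have := tsum_of_norm_bounded (f := fun j => f (j + v)) hgeom fun j =>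
    (Real.norm_eq_abs _).trans_le ((hf _).trans (hn.inv_sq_apply_add_le hv j))
  rw [Real.norm_eq_abs] at this
  convert this using 1
  norm_num
  ring

lemma exists_modEq_lt_and_not_modEq (hn : IsCubicGrowth n) {i₁ i₂ : ℤ} (hne : i₁ ≠ i₂) :
    ∃ N, (∀ v < N, i₁ ≡ i₂ [ZMOD n (v + 1)]) ∧ ¬ i₁ ≡ i₂ [ZMOD n (N + 1)] := by
  have hex : ∃ N, ¬ i₁ ≡ i₂ [ZMOD n (N + 1)] := by
    refine ⟨|i₁ - i₂|.toNat, fun h => ?_⟩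
    have hle := h.abs_le_abs_sub hne
    have hlt := hn.lt_apply_succ |i₁ - i₂|.toNat
    rw [Nat.abs_cast] at hle
    omega
  exact ⟨Nat.find hex, fun v hv => not_not.1 (Nat.find_min hex hv), Nat.find_spec hex⟩

lemma apply_le_abs_sub (hn : IsCubicGrowth n) {i₁ i₂ : ℤ} (hne : i₁ ≠ i₂) {N : ℕ}
    (hagree : ∀ v < N, i₁ ≡ i₂ [ZMOD n (v + 1)]) : (n N : ℤ) ≤ |i₁ - i₂| := by
  cases N with
  | zero => simpa [hn.zero] using Int.one_le_abs (sub_ne_zero.2 hne)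
  | succ v => simpa using (hagree v v.lt_succ_self).abs_le_abs_sub hne

end IsCubicGrowth

noncomputable def digitTerm (n : ℕ → ℕ) (i : ℤ) (v : ℕ) : ℝ :=
  ((i % (n (v + 1) : ℤ) : ℤ) : ℝ) / ((n v : ℝ) ^ 2 * (n (v + 1) : ℝ))

section digitTerm

variable {n : ℕ → ℕ} {v : ℕ}

lemma digitTerm_nonneg (hB : 0 < n (v + 1)) (i : ℤ) : 0 ≤ digitTerm n i v := by
  unfold digitTerm
  have : (0 : ℤ) ≤ i % (n (v + 1) : ℤ) := Int.emod_nonneg i (by omega)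
  positivity

lemma digitTerm_le (hB : 0 < n (v + 1)) (i : ℤ) : digitTerm n i v ≤ ((n v : ℝ) ^ 2)⁻¹ := by
  have hB' : (0 : ℝ) < n (v + 1) := by exact_mod_cast hB
  have hlt : ((i % (n (v + 1) : ℤ) : ℤ) : ℝ) ≤ n (v + 1) := by
    exact_mod_cast (Int.emod_lt_of_pos i (by omega)).le
  calc digitTerm n i v ≤ (n (v + 1) : ℝ) / ((n v : ℝ) ^ 2 * (n (v + 1) : ℝ)) := by
        unfold digitTerm; gcongr
    _ = ((n v : ℝ) ^ 2)⁻¹ := div_mul_cancel_right₀ hB'.ne' _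

lemma abs_digitTerm_sub_le (hB : 0 < n (v + 1)) (i₁ i₂ : ℤ) :
    |digitTerm n i₁ v - digitTerm n i₂ v| ≤ ((n v : ℝ) ^ 2)⁻¹ :=
  abs_sub_le_of_nonneg_of_le (digitTerm_nonneg hB i₁) (digitTerm_le hB i₁)
    (digitTerm_nonneg hB i₂) (digitTerm_le hB i₂)

lemma digitTerm_sub (i₁ i₂ : ℤ) : digitTerm n i₁ v - digitTerm n i₂ v =
    ((i₁ % (n (v + 1) : ℤ) - i₂ % (n (v + 1) : ℤ) : ℤ) : ℝ) / ((n v : ℝ) ^ 2 * (n (v + 1) : ℝ)) := by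
  unfold digitTerm
  push_cast
  ring

end digitTerm

lemma IsCubicGrowth.summable_digitTerm {n : ℕ → ℕ} (hn : IsCubicGrowth n) (i : ℤ) :
    Summable (digitTerm n i) :=
  hn.summable_of_abs_le fun _ => (abs_of_nonneg (digitTerm_nonneg (hn.pos _) i)).trans_le
    (digitTerm_le (hn.pos _) i)

lemma IsCubicGrowth.le_abs_tsum_digitTerm_sub {n : ℕ → ℕ} (hn : IsCubicGrowth n) {i₁ i₂ : ℤ}
    {N : ℕ} (hagree : ∀ v < N, i₁ ≡ i₂ [ZMOD n (v + 1)]) :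
    |((i₁ % (n (N + 1) : ℤ) - i₂ % (n (N + 1) : ℤ) : ℤ) : ℝ)| / ((n N : ℝ) ^ 2 * (n (N + 1) : ℝ))
        - 16 / 15 / (n (N + 1) : ℝ) ^ 2
      ≤ |∑' v, digitTerm n i₁ v - ∑' v, digitTerm n i₂ v| := by
  have hf : ∀ v, |digitTerm n i₁ v - digitTerm n i₂ v| ≤ ((n v : ℝ) ^ 2)⁻¹ :=
    fun v => abs_digitTerm_sub_le (hn.pos _) i₁ i₂
  have hzero : ∀ v < N, digitTerm n i₁ v - digitTerm n i₂ v = 0 := fun v hv => by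
    rw [sub_eq_zero, digitTerm, digitTerm, (hagree v hv).eq]
  have hlead : |digitTerm n i₁ N - digitTerm n i₂ N| =
      |((i₁ % (n (N + 1) : ℤ) - i₂ % (n (N + 1) : ℤ) : ℤ) : ℝ)| /
        ((n N : ℝ) ^ 2 * (n (N + 1) : ℝ)) := by
    rw [digitTerm_sub, abs_div, abs_mul, abs_pow, Nat.abs_cast, Nat.abs_cast]
  rw [← (hn.summable_digitTerm i₁).tsum_sub (hn.summable_digitTerm i₂),
    tsum_eq_add_tsum_nat_add_of_eq_zero (hn.summable_of_abs_le hf) hzero, ← hlead]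
  exact (sub_le_sub_left (hn.abs_tsum_nat_add_le hf N.succ_pos) _).trans
    (abs_sub_abs_le_abs_add _ _)

section Estimates

variable {A B D E : ℝ}

lemma two_thirds_inv_le_of_sq_mul_le (hA : 0 < A) (hD : 1 ≤ D) (hAB : 2 * A ^ 2 ≤ B) (hE : 0 < E)
    (h : 10 * (A ^ 2 * B) ≤ 7 * (D * E)) :
    2 / 3 * E⁻¹ ≤ D / (A ^ 2 * B) - 16 / 15 / B ^ 2 := by
  have hB : 0 < B := lt_of_lt_of_le (by positivity) hAB
  have hP : 0 < A ^ 2 * B := by positivity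
  have htail : 16 / 15 / B ^ 2 ≤ 8 / 15 * (D / (A ^ 2 * B)) := by
    rw [mul_div_assoc', div_le_div_iff₀ (by positivity) hP]
    nlinarith
  have hlead : 2 / 3 * E⁻¹ ≤ 7 / 15 * (D / (A ^ 2 * B)) := by
    rw [mul_div_assoc', ← div_eq_mul_inv, div_le_div_iff₀ hE hP]
    linarith
  linarith

lemma two_thirds_inv_le_of_mul_le (hA : 2 ≤ A) (hAD : A ≤ D) (hAB : A ^ 3 ≤ B)
    (h : A * B ≤ E) : 2 / 3 * E⁻¹ ≤ D / (A ^ 2 * B) - 16 / 15 / B ^ 2 := by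
  have hB : 0 < B := by nlinarith [pow_le_pow_left₀ (by norm_num) hA 3]
  have hAB' : 0 < A * B := by positivity
  have htail : 16 / 15 / B ^ 2 ≤ 4 / 15 / (A * B) := by
    rw [div_le_div_iff₀ (by positivity) hAB']
    nlinarith [pow_le_pow_left₀ (by norm_num) hA 2]
  have hlead : 1 / (A * B) ≤ D / (A ^ 2 * B) := by
    rw [div_le_div_iff₀ hAB' (by positivity)]
    nlinarith
  have hE : 2 / 3 * E⁻¹ ≤ 11 / 15 / (A * B) := by
    rw [← div_eq_mul_inv, div_le_div_iff₀ (by linarith) hAB']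
    linarith
  linarith [show 1 / (A * B) - 4 / 15 / (A * B) = 11 / 15 / (A * B) by ring]

/-- `A`, `B` stand for consecutive terms `n_N`, `n_{N+1}`, `K` for the distance `|i₁ - i₂|` and `D`
for the first nonzero residue difference. -/
lemma two_thirds_inv_le_of_cases {m : ℕ} (hm : 2 ≤ m) {K M : ℝ} (hM : 2 ≤ M) (hAK : A ≤ K)
    (hKM : K ≤ M) (hD : 1 ≤ D) (hAB : 2 * A ^ 2 ≤ B) (hgap : D = K ∨ B ≤ D + K)
    (hlevel : (A = 1 ∧ B ≤ M) ∨ (2 ≤ A ∧ A ^ 3 ≤ B ∧ B ≤ A ^ (3 * m))) :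
    2 / 3 * (M ^ (3 * m + 1))⁻¹ ≤ D / (A ^ 2 * B) - 16 / 15 / B ^ 2 := by
  have hDM : M ^ 7 ≤ D * M ^ 7 := le_mul_of_one_le_left (by positivity) hD
  have hE : D * M ^ 7 ≤ D * M ^ (3 * m + 1) :=
    mul_le_mul_of_nonneg_left (pow_le_pow_right₀ (by linarith) (by omega)) (by linarith)
  have hM3 : 4 * M ≤ M ^ 3 := by nlinarith [pow_le_pow_left₀ (by norm_num) hM 2]
  have hM7 : 16 * M ^ 3 ≤ M ^ 7 := by nlinarith [pow_le_pow_left₀ (by norm_num) hM 4]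
  rcases hlevel with ⟨rfl, hBM⟩ | ⟨hA2, hA3B, hBA⟩
  · refine two_thirds_inv_le_of_sq_mul_le one_pos hD hAB (by positivity) ?_
    linarith
  rcases hgap with rfl | hgap
  · refine two_thirds_inv_le_of_mul_le hA2 hAK hA3B ?_
    calc A * B ≤ A * A ^ (3 * m) := by gcongr
      _ = A ^ (3 * m + 1) := by ring
      _ ≤ M ^ (3 * m + 1) := by gcongr; linarith
  refine two_thirds_inv_le_of_sq_mul_le (by linarith) hD hAB (by positivity) ?_
  have hB : 0 ≤ B := by nlinarith
  rcases le_or_gt B (2 * K) with hBK | hBK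
  · calc 10 * (A ^ 2 * B) ≤ 10 * (M ^ 2 * (2 * M)) := by gcongr <;> linarith
      _ ≤ 7 * (D * M ^ (3 * m + 1)) := by nlinarith
  · have hM2 : 20 * M ^ 2 ≤ 7 * M ^ 7 := by nlinarith
    calc 10 * (A ^ 2 * B) ≤ 10 * (M ^ 2 * (2 * D)) := by gcongr <;> linarith
      _ ≤ 7 * (D * M ^ 7) := by nlinarith [mul_le_mul_of_nonneg_left hM2 (by linarith : 0 ≤ D)]
      _ ≤ 7 * (D * M ^ (3 * m + 1)) := by linarith

end Estimates

/-- The limit-periodic sequence `d_i = Σ_{v≥1} a_v(i)/(n_{v-1}^2 n_v)` is distal: for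
`i₁ ≠ i₂`, `|d_{i₁} − d_{i₂}| ≥ (2/3)·max(n₁, |i₁−i₂|)^{−(3m+1)}`. -/
theorem stmt2 (m : ℕ) (hm : 2 ≤ m) (n : ℕ → ℕ) (h0 : n 0 = 1) (h1 : 1 < n 1)
    (hlow : ∀ k, (n k) ^ 3 ≤ n (k + 1))
    (hup : ∀ k, 1 ≤ k → n (k + 1) ≤ (n k) ^ (3 * m))
    (d : ℤ → ℝ)
    (hd : ∀ i : ℤ, d i = ∑' v : ℕ,
      ((i % (n (v + 1) : ℤ) : ℤ) : ℝ) / ((n v : ℝ) ^ 2 * (n (v + 1) : ℝ))) :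
    ∀ i₁ i₂ : ℤ, i₁ ≠ i₂ →
      |d i₁ - d i₂| ≥ (2 / 3) * ((max (n 1 : ℝ) |(i₁ : ℝ) - (i₂ : ℝ)|) ^ (3 * m + 1))⁻¹ := by
  have hn : IsCubicGrowth n := ⟨h0, h1, hlow⟩
  intro i₁ i₂ hne
  obtain ⟨N, hagree, hfirst⟩ := hn.exists_modEq_lt_and_not_modEq hne
  rw [ge_iff_le, hd, hd]
  refine le_trans ?_ (hn.le_abs_tsum_digitTerm_sub hagree)
  set δ : ℤ := i₁ % (n (N + 1) : ℤ) - i₂ % (n (N + 1) : ℤ)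
  have hgap : δ = i₁ - i₂ ∨ |(n (N + 1) : ℤ)| ≤ |δ| + |i₁ - i₂| :=
    ((Int.mod_modEq _ _).sub (Int.mod_modEq _ _)).eq_or_abs_le_abs_add_abs
  have hδ : 1 ≤ |δ| := Int.one_le_abs (sub_ne_zero.2 hfirst)
  have hNK := hn.apply_le_abs_sub hne hagree
  have hlevel : ((n N : ℝ) = 1 ∧ (n (N + 1) : ℝ) ≤ max (n 1 : ℝ) |(i₁ : ℝ) - i₂|) ∨
      (2 ≤ (n N : ℝ) ∧ (n N : ℝ) ^ 3 ≤ n (N + 1) ∧ (n (N + 1) : ℝ) ≤ (n N : ℝ) ^ (3 * m)) := by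
    rcases N with _ | N
    · exact .inl ⟨by simp [h0], le_max_left _ _⟩
    · exact .inr ⟨by exact_mod_cast hn.two_le N.succ_pos, by exact_mod_cast hlow _,
        by exact_mod_cast hup _ N.succ_pos⟩
  refine two_thirds_inv_le_of_cases hm (le_max_of_le_left (by exact_mod_cast h1))
    (by exact_mod_cast hNK) (le_max_right _ _) (by exact_mod_cast hδ)
    (by exact_mod_cast hn.two_mul_sq_le N) ?_ hlevel
  rw [Nat.abs_cast] at hgap
  exact hgap.imp (fun h => by rw [h]; push_cast; rfl) fun h => by exact_mod_cast h
end

section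
/- Let r > 0 and define G(x) = 1 for 0 ≤ x < 1 and G(x) = x^r for x ≥ 1. Define q(t) = t^{−4} sup_{x≥0} G(x) e^{−tx} for t > 0. Then choosing t_i = t·2^{−i−1}, the product Π_{i=0}^∞ q(t_i)^{2^{−i−1}} is finite, and there is a constant c (depending only on r) such that h(t) := inf over sequences t ≥ t_1 ≥ t_2 ≥ … ≥ 0 with Σ t_i ≤ t of Π_{i=0}^∞ q(t_i)^{2^{−i−1}} satisfies h(t) ≤ c·t^{−4−r} for all t ∈ (0,1]. In particular, G is an approximation function. -/
open Real

lemma umax (r : ℝ) (hr : 0 < r) (u : ℝ) (hu : 0 < u) :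
    u ^ r * Real.exp (-u) ≤ r ^ r * Real.exp (-r) := by
  rw [Real.rpow_def_of_pos hu, Real.rpow_def_of_pos hr, ← Real.exp_add, ← Real.exp_add]
  apply Real.exp_le_exp.mpr
  have hlog : Real.log (u / r) ≤ u / r - 1 := Real.log_le_sub_one_of_pos (div_pos hu hr)
  have h2 : Real.log u = Real.log r + Real.log (u / r) := by
    rw [Real.log_div (ne_of_gt hu) (ne_of_gt hr)]; ring
  have h3 : (u / r - 1) * r = u - r := by field_simp
  nlinarith [mul_le_mul_of_nonneg_right hlog hr.le]

lemma termbound (r : ℝ) (hr : 0 < r) (t : ℝ) (ht : 0 < t) (ht1 : t ≤ 1)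
    (x : ℝ) (hx : 0 ≤ x) :
    (if x < 1 then (1:ℝ) else x ^ r) * Real.exp (-t * x) ≤
      (1 + r ^ r * Real.exp (-r)) * t ^ (-r) := by
  have htr : (1:ℝ) ≤ t ^ (-r) :=
    Real.one_le_rpow_of_pos_of_le_one_of_nonpos ht ht1 (by linarith)
  have hAr : 0 ≤ r ^ r * Real.exp (-r) := by positivity
  by_cases hx1 : x < 1
  · simp only [if_pos hx1]
    have : Real.exp (-t * x) ≤ 1 := by
      rw [Real.exp_le_one_iff]; nlinarith
    nlinarith
  · simp only [if_neg hx1]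
    push_neg at hx1
    have hu : 0 < t * x := by nlinarith
    have hxeq : x = (t * x) / t := by field_simp
    have hxr : x ^ r = (t*x) ^ r / t ^ r := by
      conv_lhs => rw [hxeq]
      rw [Real.div_rpow hu.le ht.le]
    have h1 : x ^ r * Real.exp (-t * x) = (t*x) ^ r * Real.exp (-(t*x)) / t ^ r := by
      rw [hxr, neg_mul]; ring
    rw [h1, Real.rpow_neg ht.le]
    have htp : 0 < t ^ r := Real.rpow_pos_of_pos ht r
    have h2 : (t*x) ^ r * Real.exp (-(t*x)) / t ^ r ≤ (r ^ r * Real.exp (-r)) / t ^ r := by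
      gcongr ?_ / _
      exact umax r hr (t*x) hu
    refine h2.trans ?_
    rw [div_eq_mul_inv]
    have : (0:ℝ) ≤ (t ^ r)⁻¹ := by positivity
    nlinarith

lemma qbd (r : ℝ) (hr : 0 < r)
    (G : ℝ → ℝ) (hG : ∀ x : ℝ, 0 ≤ x → G x = if x < 1 then 1 else x ^ r)
    (q : ℝ → ℝ)
    (hq : ∀ t : ℝ, 0 < t → q t = t ^ (-4 : ℝ) * ⨆ x : {x : ℝ // 0 ≤ x}, G x * exp (-t * x))
    (t : ℝ) (ht : 0 < t) (ht1 : t ≤ 1) :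
    1 ≤ q t ∧ q t ≤ (1 + r ^ r * Real.exp (-r)) * t ^ (-(4+r)) := by
  set A := 1 + r ^ r * Real.exp (-r) with hA
  have hA1 : (1:ℝ) ≤ A := by have : 0 ≤ r ^ r * Real.exp (-r) := by positivity
                             linarith
  have hbdd : BddAbove (Set.range fun x : {x : ℝ // 0 ≤ x} => G x * exp (-t * x)) := by
    refine ⟨A * t ^ (-r), ?_⟩
    rintro y ⟨⟨x, hx⟩, rfl⟩
    simp only
    rw [hG x hx]
    exact termbound r hr t ht ht1 x hx
  have hS1 : (1:ℝ) ≤ ⨆ x : {x : ℝ // 0 ≤ x}, G x * exp (-t * x) := by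
    have h0 := le_ciSup hbdd (⟨0, le_refl 0⟩ : {x : ℝ // 0 ≤ x})
    simp only [hG 0 le_rfl] at h0
    norm_num at h0
    simpa only [neg_mul] using h0
  have hS2 : (⨆ x : {x : ℝ // 0 ≤ x}, G x * exp (-t * x)) ≤ A * t ^ (-r) := by
    refine ciSup_le ?_
    rintro ⟨x, hx⟩
    simp only
    rw [hG x hx]
    exact termbound r hr t ht ht1 x hx
  have h4 : (1:ℝ) ≤ t ^ (-4 : ℝ) :=
    Real.one_le_rpow_of_pos_of_le_one_of_nonpos ht ht1 (by norm_num)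
  rw [hq t ht]
  constructor
  · nlinarith
  · calc t ^ (-4:ℝ) * (⨆ x : {x : ℝ // 0 ≤ x}, G x * exp (-t * x))
        ≤ t ^ (-4:ℝ) * (A * t ^ (-r)) := by
          apply mul_le_mul_of_nonneg_left hS2 (Real.rpow_nonneg ht.le _)
      _ = A * t ^ (-(4+r)) := by
          rw [show (-(4+r)) = (-4:ℝ) + (-r) by ring, Real.rpow_add ht]
          ring


/-- For `G(x) = 1` on `[0,1)` and `x^r` on `[1,∞)`, with
`q(t) = t⁻⁴ sup_{x≥0} G(x) e^{−tx}`, the choice `t_i = t·2^{−i−1}` gives a finite (multipliable)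
product `Π q(t_i)^{2^{−i−1}}`, and `h(t) = inf_{κ_t} Π q(t_i)^{2^{−i−1}} ≤ c·t^{−4−r}` on `(0,1]`;
in particular `G` is an approximation function. -/
theorem stmt7 (r : ℝ) (hr : 0 < r)
    (G : ℝ → ℝ) (hG : ∀ x : ℝ, 0 ≤ x → G x = if x < 1 then 1 else x ^ r)
    (q : ℝ → ℝ)
    (hq : ∀ t : ℝ, 0 < t → q t = t ^ (-4 : ℝ) * ⨆ x : {x : ℝ // 0 ≤ x}, G x * exp (-t * x))
    (h : ℝ → ℝ)
    (hh : ∀ t : ℝ, 0 < t → h t = sInf { P : ℝ | ∃ ts : ℕ → ℝ,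
      Antitone ts ∧ ts 0 ≤ t ∧ (∀ i, 0 ≤ ts i) ∧ (∑' i : ℕ, ts i) ≤ t ∧
      P = ∏' i : ℕ, q (ts i) ^ ((2 : ℝ) ^ (-(i : ℝ) - 1)) }) :
    ∃ c : ℝ, 0 < c ∧ ∀ t : ℝ, t ∈ Set.Ioc (0 : ℝ) 1 →
      Multipliable (fun i : ℕ => q (t * 2 ^ (-(i : ℝ) - 1)) ^ ((2 : ℝ) ^ (-(i : ℝ) - 1))) ∧
      h t ≤ c * t ^ (-(4 + r)) := by
  -- notation
  set A : ℝ := 1 + r ^ r * Real.exp (-r) with hAdef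
  have hA1 : (1:ℝ) ≤ A := by
    have : 0 ≤ r ^ r * Real.exp (-r) := by positivity
    simp only [hAdef]; linarith
  have hA0 : (0:ℝ) < A := lt_of_lt_of_le one_pos hA1
  -- the weights
  have hw : ∀ i : ℕ, (2:ℝ) ^ (-(i:ℝ) - 1) = ((1:ℝ)/2) ^ (i+1) := by
    intro i
    rw [show -(i:ℝ) - 1 = -(((i+1 : ℕ)):ℝ) by push_cast; ring,
      Real.rpow_neg (by norm_num), Real.rpow_natCast]
    simp [one_div, inv_pow]
  have hwpos : ∀ i : ℕ, (0:ℝ) < (2:ℝ) ^ (-(i:ℝ) - 1) := fun i =>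
    Real.rpow_pos_of_pos (by norm_num) _
  have hwle1 : ∀ i : ℕ, (2:ℝ) ^ (-(i:ℝ) - 1) ≤ 1 := by
    intro i; rw [hw i]
    exact pow_le_one₀ (by norm_num) (by norm_num)
  have hsumw : Summable (fun i : ℕ => ((1:ℝ)/2) ^ (i+1)) := by
    refine ((summable_geometric_of_lt_one (by norm_num : (0:ℝ) ≤ 1/2)
      (by norm_num)).mul_right (1/2)).congr fun i => ?_
    exact (pow_succ _ _).symm
  have htsumw : ∑' i : ℕ, ((1:ℝ)/2) ^ (i+1) = 1 := by
    have hg : ∑' i : ℕ, ((1:ℝ)/2) ^ i = 2 := by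
      rw [tsum_geometric_of_lt_one (by norm_num) (by norm_num)]; norm_num
    calc ∑' i : ℕ, ((1:ℝ)/2) ^ (i+1) = ∑' i : ℕ, ((1:ℝ)/2) ^ i * (1/2) := by
          simp [pow_succ]
      _ = (∑' i : ℕ, ((1:ℝ)/2) ^ i) * (1/2) := tsum_mul_right
      _ = 1 := by rw [hg]; norm_num
  have hsumiw : Summable (fun i : ℕ => ((i:ℝ)+1) * ((1:ℝ)/2) ^ (i+1)) := by
    have S1 : Summable (fun n : ℕ => (n:ℝ) * (1/2) ^ n) := by
      simpa using
        summable_pow_mul_geometric_of_norm_lt_one (R := ℝ) 1 (r := (1/2:ℝ)) (by norm_num)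
    have S2 : Summable (fun i : ℕ =>
        ((i:ℝ) * (1/2) ^ i) * (1/2) + ((1:ℝ)/2) ^ i * (1/2)) :=
      (S1.mul_right _).add
        ((summable_geometric_of_lt_one (by norm_num : (0:ℝ) ≤ 1/2) (by norm_num)).mul_right _)
    refine S2.congr fun i => ?_
    rw [pow_succ]; ring
  set K : ℝ := ∑' i : ℕ, ((i:ℝ)+1) * ((1:ℝ)/2) ^ (i+1) with hK
  set E : ℝ := (4+r) * Real.log 2 with hE
  have hE0 : 0 ≤ E := by
    have := Real.log_pos (by norm_num : (1:ℝ) < 2)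
    simp only [hE]; nlinarith
  refine ⟨A * Real.exp (E * K), by positivity, ?_⟩
  rintro t ⟨ht, ht1⟩
  -- the sequence
  set ts : ℕ → ℝ := fun i => t * 2 ^ (-(i:ℝ) - 1) with hts
  have htspos : ∀ i, 0 < ts i := fun i => mul_pos ht (hwpos i)
  have htsle1 : ∀ i, ts i ≤ 1 := fun i => by
    calc ts i ≤ 1 * 1 := mul_le_mul ht1 (hwle1 i) (hwpos i).le zero_le_one
      _ = 1 := one_mul 1
  have hqi := fun i => qbd r hr G hG q hq (ts i) (htspos i) (htsle1 i)
  have hqpos : ∀ i, 0 < q (ts i) := fun i => lt_of_lt_of_le one_pos (hqi i).1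
  -- logs
  set g : ℕ → ℝ := fun i => Real.log (q (ts i)) * ((2:ℝ) ^ (-(i:ℝ) - 1)) with hg
  have hfg : ∀ i : ℕ, q (ts i) ^ ((2:ℝ) ^ (-(i:ℝ) - 1)) = Real.exp (g i) := fun i =>
    Real.rpow_def_of_pos (hqpos i) _
  set D : ℝ := Real.log A - (4+r) * Real.log t with hD
  have hD0 : 0 ≤ D := by
    have h1 : 0 ≤ Real.log A := Real.log_nonneg hA1
    have h2 : Real.log t ≤ 0 := Real.log_nonpos ht.le ht1
    simp only [hD]; nlinarith
  have hlogq : ∀ i : ℕ, Real.log (q (ts i)) ≤ D + E * ((i:ℝ)+1) := by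
    intro i
    have h1 : Real.log (q (ts i)) ≤ Real.log (A * (ts i) ^ (-(4+r))) :=
      Real.log_le_log (hqpos i) (hqi i).2
    have h2 : Real.log (A * (ts i) ^ (-(4+r))) =
        Real.log A + (-(4+r)) * Real.log (ts i) := by
      rw [Real.log_mul (ne_of_gt hA0) (ne_of_gt (Real.rpow_pos_of_pos (htspos i) _)),
        Real.log_rpow (htspos i)]
    have h3 : Real.log (ts i) = Real.log t + (-(i:ℝ) - 1) * Real.log 2 := by
      rw [hts]
      simp only
      rw [Real.log_mul (ne_of_gt ht) (ne_of_gt (hwpos i)), Real.log_rpow (by norm_num)]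
    rw [h2, h3] at h1
    calc Real.log (q (ts i)) ≤ Real.log A + (-(4+r)) * (Real.log t + (-(i:ℝ)-1) * Real.log 2) := h1
      _ = D + E * ((i:ℝ)+1) := by simp only [hD, hE]; ring
  have hgnn : ∀ i, 0 ≤ g i := fun i =>
    mul_nonneg (Real.log_nonneg (hqi i).1) (hwpos i).le
  set b : ℕ → ℝ := fun i => D * ((1:ℝ)/2) ^ (i+1) + E * (((i:ℝ)+1) * ((1:ℝ)/2) ^ (i+1)) with hb
  have hgleb : ∀ i, g i ≤ b i := by
    intro i
    simp only [hg, hb]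
    calc Real.log (q (ts i)) * ((2:ℝ) ^ (-(i:ℝ) - 1))
        ≤ (D + E * ((i:ℝ)+1)) * ((2:ℝ) ^ (-(i:ℝ) - 1)) :=
          mul_le_mul_of_nonneg_right (hlogq i) (hwpos i).le
      _ = D * ((1:ℝ)/2) ^ (i+1) + E * (((i:ℝ)+1) * ((1:ℝ)/2) ^ (i+1)) := by
          rw [hw i]; ring
  have hbsum : Summable b := (hsumw.mul_left D).add (hsumiw.mul_left E)
  have hgsum : Summable g := Summable.of_nonneg_of_le hgnn hgleb hbsum
  have htsumb : ∑' i, b i = D + E * K := by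
    rw [hb]
    rw [Summable.tsum_add (hsumw.mul_left D) (hsumiw.mul_left E), tsum_mul_left, tsum_mul_left,
      htsumw, hK]
    ring
  have hsle : ∑' i, g i ≤ D + E * K := by
    rw [← htsumb]
    exact Summable.tsum_le_tsum hgleb hgsum hbsum
  -- the product
  have hprod : HasProd (fun i : ℕ => q (ts i) ^ ((2:ℝ) ^ (-(i:ℝ) - 1)))
      (Real.exp (∑' i, g i)) := by
    rw [show (fun i : ℕ => q (ts i) ^ ((2:ℝ) ^ (-(i:ℝ) - 1))) = Real.exp ∘ g from funext hfg]
    exact hgsum.hasSum.rexp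
  have hPle : Real.exp (∑' i, g i) ≤ A * Real.exp (E * K) * t ^ (-(4+r)) := by
    calc Real.exp (∑' i, g i) ≤ Real.exp (D + E * K) := Real.exp_le_exp.mpr hsle
      _ = Real.exp (Real.log A) * Real.exp (Real.log t * (-(4+r))) * Real.exp (E * K) := by
          rw [← Real.exp_add, ← Real.exp_add]; congr 1; simp only [hD]; ring
      _ = A * Real.exp (E * K) * t ^ (-(4+r)) := by
          rw [Real.exp_log hA0, ← Real.rpow_def_of_pos ht]; ring
  constructor
  · exact hprod.multipliable
  · rw [hh t ht]
    set S : Set ℝ := { P : ℝ | ∃ ts' : ℕ → ℝ,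
      Antitone ts' ∧ ts' 0 ≤ t ∧ (∀ i, 0 ≤ ts' i) ∧ (∑' i : ℕ, ts' i) ≤ t ∧
      P = ∏' i : ℕ, q (ts' i) ^ ((2 : ℝ) ^ (-(i : ℝ) - 1)) } with hS
    have hmem : (∏' i : ℕ, q (ts i) ^ ((2:ℝ) ^ (-(i:ℝ) - 1))) ∈ S := by
      refine ⟨ts, ?_, ?_, fun i => (htspos i).le, ?_, rfl⟩
      · intro i j hij
        simp only [hts, hw i, hw j]
        exact mul_le_mul_of_nonneg_left
          (pow_le_pow_of_le_one (by norm_num) (by norm_num) (by omega)) ht.le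
      · simp only [hts, hw 0]
        nlinarith
      · have : ∑' i : ℕ, ts i = t := by
          simp only [hts]
          rw [tsum_congr (fun i => by rw [hw i]), tsum_mul_left, htsumw, mul_one]
        linarith
    have hPval : (∏' i : ℕ, q (ts i) ^ ((2:ℝ) ^ (-(i:ℝ) - 1))) = Real.exp (∑' i, g i) :=
      hprod.tprod_eq
    by_cases hbb : BddBelow S
    · calc sInf S ≤ ∏' i : ℕ, q (ts i) ^ ((2:ℝ) ^ (-(i:ℝ) - 1)) := csInf_le hbb hmem
        _ ≤ A * Real.exp (E * K) * t ^ (-(4+r)) := hPval ▸ hPle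
    · rw [Real.sInf_of_not_bddBelow hbb]
      positivity
end

section
/- Let H be a bounded self-adjoint operator on ℓ²(ℤ). Suppose there exist constants C < ∞ and r > 0 and an orthonormal basis (φ_j)_{j∈ℤ} of ℓ²(ℤ) consisting of eigenvectors of H such that |φ_j(n)| ≤ C e^{−r|n − j|} for all n, j ∈ ℤ. Then H exhibits uniform dynamical localization: there exist constants C' < ∞ and r' > 0 such that sup_{t∈ℝ} |⟨δ_n, e^{−itH} δ_m⟩| ≤ C' e^{−r'|n−m|} for all n, m ∈ ℤ. -/
/-!
Expanding `δ_m` in the eigenbasis gives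
`⟨δ_n, e^{-itH} δ_m⟩ = ∑_j conj (φ_j m) e^{-itμ_j} φ_j n`, and the phases have modulus one, so
the matrix element is bounded by `C² ∑_j e^{-r|m-j|} e^{-r|n-j|}` uniformly in `t`. By the
triangle inequality each term is at most `e^{-(r/2)|n-m|} e^{-(r/2)|j-m|}`, and the remaining
sum over `j` is a finite constant.
-/

open Real

theorem NormedSpace.exp_apply_of_apply_eq_smul {𝕂 E : Type*} [RCLike 𝕂] [NormedAddCommGroup E]
    [NormedSpace 𝕂 E] [CompleteSpace E] {A : E →L[𝕂] E} {v : E} {c : 𝕂} (h : A v = c • v) :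
    NormedSpace.exp A v = NormedSpace.exp c • v := by
  have hpow (k : ℕ) : (A ^ k) v = c ^ k • v := by
    induction k with
    | zero => simp
    | succ k ih => simp [pow_succ, h, ih, smul_smul, mul_comm]
  have hA := (NormedSpace.exp_series_hasSum_exp' (𝕂 := 𝕂) A).mapL (ContinuousLinearMap.apply 𝕂 E v)
  have hc := (NormedSpace.exp_series_hasSum_exp' (𝕂 := 𝕂) c).smul_const v
  refine hA.unique (hc.congr_fun fun k => ?_)
  simp [hpow, smul_smul, mul_comm]

theorem exp_neg_mul_abs_sub_mul_exp_le {r : ℝ} (hr : 0 ≤ r) (x y z : ℝ) :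
    exp (-r * |x - z|) * exp (-r * |y - z|) ≤
      exp (-(r / 2) * |y - x|) * exp (-(r / 2) * |z - x|) := by
  rw [← Real.exp_add, ← Real.exp_add, Real.exp_le_exp, abs_sub_comm z x]
  have := mul_le_mul_of_nonneg_left (abs_sub_le y z x) hr
  rw [abs_sub_comm z x] at this
  nlinarith [abs_nonneg (x - z), abs_nonneg (y - z)]

theorem HilbertBasis.hasSum_inner_apply_of_apply_eq_smul {ι 𝕜 E : Type*} [RCLike 𝕜]
    [NormedAddCommGroup E] [InnerProductSpace 𝕜 E] (b : HilbertBasis ι 𝕜 E) {T : E →L[𝕜] E}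
    {c : ι → 𝕜} (hT : ∀ j, T (b j) = c j • b j) (x y : E) :
    HasSum (fun j => inner 𝕜 (b j) y * c j * inner 𝕜 x (b j)) (inner 𝕜 x (T y)) := by
  refine (((b.hasSum_repr y).mapL T).mapL (innerSL 𝕜 x)).congr_fun fun j => ?_
  simp only [innerSL_apply_apply, b.repr_apply_apply, map_smul, hT, smul_eq_mul]
  ring

theorem summable_exp_neg_mul_abs_int {a : ℝ} (ha : 0 < a) :
    Summable fun j : ℤ => exp (-a * |(j : ℝ)|) := by
  have hnat : Summable fun k : ℕ => exp (-a * k) := by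
    simpa [mul_comm] using Real.summable_exp_nat_mul_iff.mpr (neg_lt_zero.mpr ha)
  refine .of_nat_of_neg (hnat.congr fun k => ?_) (hnat.congr fun k => ?_) <;> simp

theorem norm_le_of_hasSum_of_le_exp_mul_exp {E : Type*} [SeminormedAddCommGroup E] {a : ℤ → E}
    {s : E} (hs : HasSum a s) {K r : ℝ} (hr : 0 < r) {n m : ℤ}
    (ha : ∀ j : ℤ, ‖a j‖ ≤ K * (exp (-r * |(m : ℝ) - j|) * exp (-r * |(n : ℝ) - j|))) :
    ‖s‖ ≤ K * (∑' j : ℤ, exp (-(r / 2) * |(j : ℝ)|)) * exp (-(r / 2) * |(n : ℝ) - m|) := by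
  have hK : 0 ≤ K := nonneg_of_mul_nonneg_left ((norm_nonneg _).trans (ha 0)) (by positivity)
  have hshift : HasSum (fun j : ℤ => exp (-(r / 2) * |(j : ℝ) - m|))
      (∑' j : ℤ, exp (-(r / 2) * |(j : ℝ)|)) :=
    ((Equiv.subRight m).hasSum_iff.mpr
      (summable_exp_neg_mul_abs_int (half_pos hr)).hasSum).congr_fun fun j => by simp
  refine (hs.norm_le_of_bounded (hshift.mul_left (K * exp (-(r / 2) * |(n : ℝ) - m|)))
    fun j => ?_).trans_eq (by ring)
  calc ‖a j‖ ≤ K * (exp (-r * |(m : ℝ) - j|) * exp (-r * |(n : ℝ) - j|)) := ha j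
    _ ≤ K * (exp (-(r / 2) * |(n : ℝ) - m|) * exp (-(r / 2) * |(j : ℝ) - m|)) :=
      mul_le_mul_of_nonneg_left (exp_neg_mul_abs_sub_mul_exp_le hr.le _ _ _) hK
    _ = _ := by ring

theorem stmt9_general (H : lp (fun _ : ℤ => ℂ) 2 →L[ℂ] lp (fun _ : ℤ => ℂ) 2)
    (φ : ℤ → lp (fun _ : ℤ => ℂ) 2)
    (hON : Orthonormal ℂ φ)
    (hcomplete : (Submodule.span ℂ (Set.range φ)).topologicalClosure = ⊤)
    (heig : ∀ j : ℤ, ∃ μ : ℝ, H (φ j) = (μ : ℂ) • φ j)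
    (C r : ℝ) (hr : 0 < r)
    (hloc : ∀ j n : ℤ, ‖φ j n‖ ≤ C * exp (-r * |(n : ℝ) - (j : ℝ)|)) :
    ∃ C' r' : ℝ, 0 ≤ C' ∧ 0 < r' ∧ ∀ t : ℝ, ∀ n m : ℤ,
      ‖(inner ℂ (lp.single 2 n (1 : ℂ))
          ((NormedSpace.exp ((-(t : ℂ) * Complex.I) • H)) (lp.single 2 m (1 : ℂ))) : ℂ)‖ ≤
        C' * exp (-r' * |(n : ℝ) - (m : ℝ)|) := by
  choose μ hμ using heig
  let b := HilbertBasis.mk hON hcomplete.ge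
  have hb : ⇑b = φ := HilbertBasis.coe_mk hON hcomplete.ge
  refine ⟨C ^ 2 * ∑' j : ℤ, exp (-(r / 2) * |(j : ℝ)|), r / 2, by positivity, half_pos hr,
    fun t n m => ?_⟩
  have hevol (j : ℤ) : NormedSpace.exp ((-(t : ℂ) * Complex.I) • H) (b j) =
      NormedSpace.exp (-(t : ℂ) * Complex.I * μ j) • b j :=
    NormedSpace.exp_apply_of_apply_eq_smul (by rw [smul_apply, hb, hμ, smul_smul])
  refine norm_le_of_hasSum_of_le_exp_mul_exp (b.hasSum_inner_apply_of_apply_eq_smul hevol _ _) hr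
    fun j => ?_
  calc _ = ‖φ j m‖ * ‖φ j n‖ := by
        simp [hb, lp.inner_single_left, lp.inner_single_right, ← Complex.exp_eq_exp_ℂ,
          Complex.norm_exp]
    _ ≤ (C * exp (-r * |(m : ℝ) - j|)) * (C * exp (-r * |(n : ℝ) - j|)) :=
        mul_le_mul (hloc j m) (hloc j n) (norm_nonneg _) ((norm_nonneg _).trans (hloc j m))
    _ = _ := by ring

/-- ULE (with centers `m_j = j`) implies uniform dynamical localization:
if a bounded self-adjoint `H` on `ℓ²(ℤ)` has an orthonormal basis of eigenvectors `φ_j` with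
`|φ_j(n)| ≤ C e^{−r|n−j|}`, then `sup_t |⟨δ_n, e^{−itH} δ_m⟩| ≤ C' e^{−r'|n−m|}`. -/
theorem stmt9 (H : lp (fun _ : ℤ => ℂ) 2 →L[ℂ] lp (fun _ : ℤ => ℂ) 2)
    (hsa : IsSelfAdjoint H)
    (φ : ℤ → lp (fun _ : ℤ => ℂ) 2)
    (hON : Orthonormal ℂ φ)
    (hcomplete : (Submodule.span ℂ (Set.range φ)).topologicalClosure = ⊤)
    (heig : ∀ j : ℤ, ∃ μ : ℝ, H (φ j) = (μ : ℂ) • φ j)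
    (C r : ℝ) (hC : 0 ≤ C) (hr : 0 < r)
    (hloc : ∀ j n : ℤ, ‖φ j n‖ ≤ C * exp (-r * |(n : ℝ) - (j : ℝ)|)) :
    ∃ C' r' : ℝ, 0 ≤ C' ∧ 0 < r' ∧ ∀ t : ℝ, ∀ n m : ℤ,
      ‖(inner ℂ (lp.single 2 n (1 : ℂ))
          ((NormedSpace.exp ((-(t : ℂ) * Complex.I) • H)) (lp.single 2 m (1 : ℂ))) : ℂ)‖ ≤
        C' * exp (-r' * |(n : ℝ) - (m : ℝ)|) :=
  stmt9_general H φ hON hcomplete heig C r hr hloc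
end

section
/- With α_v and d as in Pöschel's example in one dimension (d_i = Σ_{v=1}^∞ α_v(i) 2^{−v}, where α_v is the period-2^v characteristic function of A_v), the sequence d satisfies the distality bound: for every nonzero integer k, inf_{i∈ℤ} |d_i − d_{i+k}| ≥ (16|k|)^{−1}. -/
/-!
Write `d i = ∑ γ_j(i) 2⁻ʲ⁻¹`, where the digit `γ_j(i) = α_{j+1}(i)` is the `j`-th binary digit
of `i`, flipped at odd `j`. For `k = 2 ^ s * m` with `m` odd, `i` and `i + k` share their bits
below `s` and differ at `s`, so `d i - d (i + k) = ±2⁻ˢ⁻¹ + (later digit differences)`. The later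
differences can only cancel the leading term if each of them opposes it. Because of the flips,
opposing digits make the bit differences alternate in sign; up to position `s + N + 3`, where
`2 ^ N ≤ |m| < 2 ^ (N + 1)`, that would make `(i + k) - i` about `±2 ^ (s + N + 4) / 3` modulo
`2 ^ (s + N + 4)`, impossible for `|k| < 2 ^ (s + N + 1)`. So some digit at `t ≤ s + N + 3` does not
oppose the leading one, leaving a gap `|d i - d (i + k)| ≥ 2⁻ᵗ⁻¹ ≥ 2⁻ˢ⁻ᴺ⁻⁴ ≥ (16 |k|)⁻¹`.
-/

open Finset

namespace PoschelExample

lemma summable_inv_two_pow_succ : Summable fun j : ℕ => (2:ℝ)⁻¹ ^ (j + 1) := by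
  simpa only [pow_succ] using
    (summable_geometric_of_lt_one (by norm_num) (by norm_num)).mul_right (2:ℝ)⁻¹

lemma tsum_inv_two_pow_succ : ∑' j : ℕ, (2:ℝ)⁻¹ ^ (j + 1) = 1 := by
  simp only [pow_succ, tsum_mul_right, tsum_geometric_inv_two]
  norm_num

lemma sum_range_inv_two_pow_succ (s : ℕ) : ∑ j ∈ range s, (2:ℝ)⁻¹ ^ (j + 1) = 1 - 2⁻¹ ^ s := by
  induction s with
  | zero => simp
  | succ s ih => rw [sum_range_succ, ih, pow_succ]; ring

lemma summable_mul_inv_two_pow_succ {e : ℕ → ℝ} (he : ∀ j, |e j| ≤ 1) :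
    Summable fun j => e j * (2:ℝ)⁻¹ ^ (j + 1) := by
  refine summable_inv_two_pow_succ.of_norm_bounded fun j => ?_
  rw [norm_mul, Real.norm_eq_abs, Real.norm_of_nonneg (by positivity)]
  exact mul_le_of_le_one_left (by positivity) (he j)

lemma inv_two_pow_le_abs_tsum {e : ℕ → ℝ} {s t : ℕ} (he : ∀ j, |e j| ≤ 1)
    (hlow : ∀ j < s, e j = 0) (hs : |e s| = 1) (hst : s < t) (ht : 0 ≤ e s * e t) :
    (2:ℝ)⁻¹ ^ (t + 1) ≤ |∑' j, e j * (2:ℝ)⁻¹ ^ (j + 1)| := by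
  wlog hs1 : e s = 1 generalizing e
  · have hneg : e s = -1 := ((abs_eq zero_le_one).mp hs).resolve_left hs1
    have := this (e := fun j => -e j) (by simpa using he) (by simpa using hlow)
      (by simpa using hs) (by simpa using ht) (by simp [hneg])
    simpa [neg_mul, tsum_neg, abs_neg] using this
  refine le_trans ?_ (le_abs_self _)
  have hsum := summable_mul_inv_two_pow_succ he
  have hshift : Summable fun j => (e j + 1) * (2:ℝ)⁻¹ ^ (j + 1) := by
    simpa only [add_mul, one_mul] using hsum.add summable_inv_two_pow_succ
  have htsum : ∑' j, (e j + 1) * (2:ℝ)⁻¹ ^ (j + 1) = ∑' j, e j * (2:ℝ)⁻¹ ^ (j + 1) + 1 := by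
    simp only [add_mul, one_mul]
    rw [hsum.tsum_add summable_inv_two_pow_succ, tsum_inv_two_pow_succ]
  -- the digits up to `s` already contribute `1`, the full mass of the shifted weights
  have hhead : ∑ j ∈ range (s + 1), (e j + 1) * (2:ℝ)⁻¹ ^ (j + 1) = 1 := by
    rw [sum_range_succ,
      sum_congr rfl fun j hj => by rw [hlow j (mem_range.mp hj), zero_add, one_mul],
      sum_range_inv_two_pow_succ, hs1, pow_succ]
    ring
  have het : 0 ≤ e t := by simpa [hs1] using ht
  have hfin := hshift.sum_le_tsum (insert t (range (s + 1)))
    (fun j _ => mul_nonneg (by linarith [(abs_le.mp (he j)).1]) (by positivity))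
  rw [sum_insert (by simpa using hst), hhead, htsum] at hfin
  nlinarith [pow_pos (by norm_num : (0:ℝ) < 2⁻¹) (t + 1)]

/-- The `j`-th binary digit of `x`, for negative `x` that of its two's complement. -/
def bit (j : ℕ) (x : ℤ) : ℤ := x / 2 ^ j % 2

lemma bit_eq_zero_or_one (j : ℕ) (x : ℤ) : bit j x = 0 ∨ bit j x = 1 :=
  Int.emod_two_eq _

lemma bit_zero (x : ℤ) : bit 0 x = x % 2 := by simp [bit]

lemma bit_zero_add_sub_bit_zero_of_odd (x : ℤ) {m : ℤ} (hm : Odd m) :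
    bit 0 (x + m) - bit 0 x = 1 ∨ bit 0 (x + m) - bit 0 x = -1 := by
  obtain ⟨r, rfl⟩ := hm
  simp only [bit_zero]
  omega

lemma bit_add_index (s u : ℕ) (x : ℤ) : bit (s + u) x = bit u (x / 2 ^ s) := by
  rw [bit, bit, pow_add, Int.ediv_ediv_of_nonneg (by positivity)]

lemma bit_add_index_add_two_pow_mul (s u : ℕ) (x m : ℤ) :
    bit (s + u) (x + 2 ^ s * m) = bit u (x / 2 ^ s + m) := by
  rw [bit_add_index, Int.add_mul_ediv_left _ _ (by positivity)]

lemma bit_add_two_pow_mul_of_lt {j s : ℕ} (h : j < s) (x m : ℤ) :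
    bit j (x + 2 ^ s * m) = bit j x := by
  obtain ⟨r, rfl⟩ : ∃ r, s = j + 1 + r := ⟨s - (j + 1), by omega⟩
  have hs : (2:ℤ) ^ (j + 1 + r) * m = 2 * (2 ^ r * m) * 2 ^ j := by ring
  rw [bit, bit, hs, Int.add_mul_ediv_right _ _ (by positivity), Int.add_mul_emod_self_left]

lemma emod_two_pow_succ (L : ℕ) (x : ℤ) : x % 2 ^ (L + 1) = x % 2 ^ L + 2 ^ L * bit L x := by
  have h1 := Int.mul_ediv_add_emod x (2 ^ L)
  have h2 := Int.mul_ediv_add_emod (x / 2 ^ L) 2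
  rw [pow_succ, Int.emod_def, ← Int.ediv_ediv_of_nonneg (by positivity), bit]
  linear_combination -h1 - 2 ^ L * h2

lemma emod_two_pow_eq_sum_bit (L : ℕ) (x : ℤ) : x % 2 ^ L = ∑ j ∈ range L, 2 ^ j * bit j x := by
  induction L with
  | zero => simp
  | succ L ih => rw [emod_two_pow_succ, ih, sum_range_succ]

lemma emod_two_pow_succ_lt_iff (j : ℕ) (x : ℤ) : x % 2 ^ (j + 1) < 2 ^ j ↔ bit j x = 0 := by
  have h0 : 0 ≤ x % 2 ^ j := Int.emod_nonneg _ (by positivity)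
  have h1 : x % 2 ^ j < 2 ^ j := Int.emod_lt_of_pos _ (by positivity)
  rw [emod_two_pow_succ]
  rcases bit_eq_zero_or_one j x with h | h <;> simp [h, h0, h1]

/-- If the bit differences `δ j` of `x + m` and `x` alternated, `δ (j + 1) = (-1) ^ j * δ 0`, up
to position `N + 3`, then `3 * ((x + m) % 2 ^ (N + 4) - x % 2 ^ (N + 4)) = ±(5 ± 2 ^ (N + 4))`,
which is too far from `3 * m` to be congruent to it modulo `3 * 2 ^ (N + 4)`. -/
lemma exists_bit_sub_not_alternating (x m : ℤ) (N : ℕ) (hm : Odd m) (hmN : |m| < 2 ^ (N + 1)) :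
    ∃ t, 0 < t ∧ t ≤ N + 3 ∧
      0 ≤ (-1) ^ t * ((bit 0 (x + m) - bit 0 x) * (bit t (x + m) - bit t x)) := by
  by_contra! h
  set δ : ℕ → ℤ := fun j => bit j (x + m) - bit j x with hδ
  have hδ0 : δ 0 = 1 ∨ δ 0 = -1 := bit_zero_add_sub_bit_zero_of_odd x hm
  have halt : ∀ j ∈ range (N + 3), 2 ^ (j + 1) * δ (j + 1) = 2 * δ 0 * (-2) ^ j := by
    intro j hj
    have hj : (-1) ^ (j + 1) * (δ 0 * δ (j + 1)) < 0 := h (j + 1) (by omega) (by simp at hj; omega)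
    have hδj : δ (j + 1) = -1 ∨ δ (j + 1) = 0 ∨ δ (j + 1) = 1 := by
      rcases bit_eq_zero_or_one (j + 1) (x + m) with hb | hb <;>
        rcases bit_eq_zero_or_one (j + 1) x with hb' | hb' <;> simp only [hδ, hb, hb'] <;> norm_num
    suffices δ (j + 1) = (-1) ^ j * δ 0 by rw [this, neg_pow (2:ℤ)]; ring
    rw [pow_succ] at hj
    rcases neg_one_pow_eq_or ℤ j with hu | hu <;> rcases hδ0 with h0 | h0 <;>
      rcases hδj with h1 | h1 | h1 <;> simp [hu, h0, h1] at hj ⊢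
  have hsum : 3 * ((x + m) % 2 ^ (N + 4) - x % 2 ^ (N + 4)) = δ 0 * (5 + (-2) ^ (N + 4)) := by
    have hgeom := geom_sum_mul (-2 : ℤ) (N + 3)
    rw [emod_two_pow_eq_sum_bit, emod_two_pow_eq_sum_bit, ← sum_sub_distrib]
    simp only [← mul_sub]
    rw [sum_range_succ', sum_congr rfl halt, ← mul_sum]
    linear_combination (-2 * δ 0) * hgeom
  obtain ⟨q, hq⟩ : (2:ℤ) ^ (N + 4) ∣ (x + m) % 2 ^ (N + 4) - x % 2 ^ (N + 4) - m :=
    ⟨x / 2 ^ (N + 4) - (x + m) / 2 ^ (N + 4), by rw [Int.emod_def, Int.emod_def]; ring⟩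
  have hP : (1:ℤ) ≤ 2 ^ (N + 1) := one_le_pow₀ (by norm_num)
  have h8 : (2:ℤ) ^ (N + 4) = 8 * 2 ^ (N + 1) := by ring
  have hmP := abs_lt.mp hmN
  rcases neg_one_pow_eq_or ℤ (N + 4) with hs | hs <;>
    rw [neg_pow, hs, h8] at hsum <;> rw [h8] at hq <;>
    rcases hδ0 with h0 | h0 <;> rw [h0] at hsum <;>
    rcases lt_trichotomy q 0 with hq0 | hq0 | hq0 <;> nlinarith

/-- The `j`-th digit of Pöschel's example: `α (j + 1) x` is `digit j x`. -/
def digit (j : ℕ) (x : ℤ) : ℤ := (bit j x + j) % 2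

lemma digit_sub_digit (j : ℕ) (x y : ℤ) :
    digit j x - digit j y = (-1) ^ j * (bit j x - bit j y) := by
  have hx := bit_eq_zero_or_one j x
  have hy := bit_eq_zero_or_one j y
  rcases Nat.even_or_odd j with hj | hj
  · rw [hj.neg_one_pow, digit, digit]
    have := Int.even_iff.mp (Int.even_coe_nat j |>.mpr hj)
    omega
  · rw [hj.neg_one_pow, digit, digit]
    have := Int.odd_iff.mp (Int.odd_coe_nat j |>.mpr hj)
    omega

lemma abs_digit_le_one (j : ℕ) (x : ℤ) : |digit j x| ≤ 1 := by
  have h0 := Int.emod_nonneg (bit j x + j) two_ne_zero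
  have h1 := Int.emod_lt_of_pos (bit j x + j) two_pos
  rw [digit, abs_le]
  omega

lemma abs_digit_sub_digit_le_one (j : ℕ) (x y : ℤ) : |digit j x - digit j y| ≤ 1 := by
  rw [digit_sub_digit, abs_mul, abs_pow, abs_neg, abs_one, one_pow, one_mul, abs_le]
  rcases bit_eq_zero_or_one j x with hx | hx <;> rcases bit_eq_zero_or_one j y with hy | hy <;>
    simp [hx, hy]

lemma digit_add_two_pow_mul_of_lt {j s : ℕ} (h : j < s) (x m : ℤ) :
    digit j (x + 2 ^ s * m) = digit j x := by
  rw [digit, digit, bit_add_two_pow_mul_of_lt h]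

lemma abs_digit_sub_digit_add_two_pow_mul_of_odd (s : ℕ) (x : ℤ) {m : ℤ} (hm : Odd m) :
    |digit s x - digit s (x + 2 ^ s * m)| = 1 := by
  have hx : bit s x = bit 0 (x / 2 ^ s) := bit_add_index s 0 x
  have hy : bit s (x + 2 ^ s * m) = bit 0 (x / 2 ^ s + m) := bit_add_index_add_two_pow_mul s 0 x m
  rw [digit_sub_digit, abs_mul, abs_pow, abs_neg, abs_one, one_pow, one_mul, hx, hy, abs_sub_comm]
  rcases bit_zero_add_sub_bit_zero_of_odd (x / 2 ^ s) hm with h | h <;> simp [h]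

lemma exists_digit_sub_mul_digit_sub_nonneg (x m : ℤ) (s N : ℕ) (hm : Odd m)
    (hmN : |m| < 2 ^ (N + 1)) :
    ∃ t, s < t ∧ t ≤ s + N + 3 ∧
      0 ≤ (digit s x - digit s (x + 2 ^ s * m)) * (digit t x - digit t (x + 2 ^ s * m)) := by
  obtain ⟨u, hu0, huN, hu⟩ := exists_bit_sub_not_alternating (x / 2 ^ s) m N hm hmN
  refine ⟨s + u, by omega, by omega, ?_⟩
  have hsq : (-1:ℤ) ^ s * (-1) ^ s = 1 := by rw [← mul_pow]; norm_num
  rw [digit_sub_digit, digit_sub_digit, pow_add, bit_add_index_add_two_pow_mul, bit_add_index,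
    show bit s x = bit 0 (x / 2 ^ s) from bit_add_index s 0 x,
    show bit s (x + 2 ^ s * m) = bit 0 (x / 2 ^ s + m) from bit_add_index_add_two_pow_mul s 0 x m]
  linear_combination hu - ((-1) ^ u * ((bit 0 (x / 2 ^ s + m) - bit 0 (x / 2 ^ s)) *
    (bit u (x / 2 ^ s + m) - bit u (x / 2 ^ s)))) * hsq

lemma alpha_succ_eq_digit (α : ℕ → ℤ → ℝ)
    (hα : ∀ v : ℕ, 1 ≤ v → ∀ i : ℤ,
      α v i = if (Even v ↔ i % (2 ^ v : ℤ) < (2 ^ (v - 1) : ℤ)) then 1 else 0)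
    (j : ℕ) (i : ℤ) : α (j + 1) i = digit j i := by
  simp only [hα (j + 1) (by omega) i, Nat.add_sub_cancel, emod_two_pow_succ_lt_iff,
    Nat.even_add_one, Nat.not_even_iff_odd, digit]
  rcases Nat.even_or_odd j with hj | hj
  · have := Int.even_iff.mp (Int.even_coe_nat j |>.mpr hj)
    rcases bit_eq_zero_or_one j i with hb | hb <;> simp [hb, hj, Int.add_emod, this]
  · have := Int.odd_iff.mp (Int.odd_coe_nat j |>.mpr hj)
    rcases bit_eq_zero_or_one j i with hb | hb <;> simp [hb, hj, Int.add_emod, this]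

lemma exists_eq_two_pow_mul_odd {k : ℤ} (hk : k ≠ 0) : ∃ s : ℕ, ∃ m : ℤ, Odd m ∧ k = 2 ^ s * m := by
  obtain ⟨m, hkm, hm⟩ :=
    (Int.finiteMultiplicity_iff (a := 2).mpr ⟨by norm_num, hk⟩).exists_eq_pow_mul_and_not_dvd
  exact ⟨_, m, Int.not_even_iff_odd.mp (by rwa [even_iff_two_dvd]), hkm⟩

lemma exists_two_pow_le_abs_lt {m : ℤ} (hm : m ≠ 0) : ∃ N : ℕ, 2 ^ N ≤ |m| ∧ |m| < 2 ^ (N + 1) := by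
  refine ⟨Nat.log 2 m.natAbs, ?_, ?_⟩ <;> rw [Int.abs_eq_natAbs]
  · exact_mod_cast Nat.pow_log_le_self 2 (Int.natAbs_ne_zero.mpr hm)
  · exact_mod_cast Nat.lt_pow_succ_log_self (by norm_num) _

lemma sub_eq_tsum_digit_sub (α : ℕ → ℤ → ℝ)
    (hα : ∀ v : ℕ, 1 ≤ v → ∀ i : ℤ,
      α v i = if (Even v ↔ i % (2 ^ v : ℤ) < (2 ^ (v - 1) : ℤ)) then 1 else 0)
    (d : ℤ → ℝ) (hd : ∀ i : ℤ, d i = ∑' v : ℕ, α (v + 1) i * (2 : ℝ)⁻¹ ^ (v + 1)) (x y : ℤ) :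
    d x - d y = ∑' j, ((digit j x - digit j y : ℤ) : ℝ) * (2 : ℝ)⁻¹ ^ (j + 1) := by
  have hsummable (z : ℤ) : Summable fun j => (digit j z : ℝ) * (2 : ℝ)⁻¹ ^ (j + 1) :=
    summable_mul_inv_two_pow_succ fun j => by exact_mod_cast abs_digit_le_one j z
  simp only [hd, alpha_succ_eq_digit α hα, ← (hsummable x).tsum_sub (hsummable y)]
  push_cast
  simp only [sub_mul]

end PoschelExample

open PoschelExample in
/-- Distality of Pöschel's example: for `d_i = Σ_{v≥1} α_v(i) 2^{−v}` (with `α_v` the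
`2^v`-periodic indicator of `A_v`), one has `inf_i |d_i − d_{i+k}| ≥ (16|k|)⁻¹` for `k ≠ 0`. -/
theorem stmt15 (α : ℕ → ℤ → ℝ)
    (hα : ∀ v : ℕ, 1 ≤ v → ∀ i : ℤ,
      α v i = if (Even v ↔ i % (2 ^ v : ℤ) < (2 ^ (v - 1) : ℤ)) then 1 else 0)
    (d : ℤ → ℝ) (hd : ∀ i : ℤ, d i = ∑' v : ℕ, α (v + 1) i * (2 : ℝ)⁻¹ ^ (v + 1)) :
    ∀ k : ℤ, k ≠ 0 → ∀ i : ℤ, (16 * |(k : ℝ)|)⁻¹ ≤ |d i - d (i + k)| := by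
  intro k hk i
  obtain ⟨s, m, hm, rfl⟩ := exists_eq_two_pow_mul_odd hk
  obtain ⟨N, hNm, hmN⟩ := exists_two_pow_le_abs_lt (m := m) (by rintro rfl; simp at hm)
  obtain ⟨t, hst, htN, ht⟩ := exists_digit_sub_mul_digit_sub_nonneg i m s N hm hmN
  have hpow : (2 : ℤ) ^ (t + 1) ≤ 16 * |2 ^ s * m| := calc
    (2 : ℤ) ^ (t + 1) ≤ 2 ^ (s + N + 4) := pow_le_pow_right₀ (by norm_num) (by omega)
    _ = 16 * (2 ^ s * 2 ^ N) := by ring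
    _ ≤ 16 * |2 ^ s * m| := by rw [abs_mul, abs_pow, abs_two]; gcongr
  calc (16 * |((2 ^ s * m : ℤ) : ℝ)|)⁻¹ ≤ (2 : ℝ)⁻¹ ^ (t + 1) := by
        rw [inv_pow]; exact inv_anti₀ (by positivity) (by exact_mod_cast hpow)
    _ ≤ |d i - d (i + 2 ^ s * m)| := by
        rw [sub_eq_tsum_digit_sub α hα d hd]
        refine inv_two_pow_le_abs_tsum (fun j => ?_) (fun j hj => ?_) ?_ hst (by exact_mod_cast ht)
        · exact_mod_cast abs_digit_sub_digit_le_one j i _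
        · simp [digit_add_two_pow_mul_of_lt hj]
        · exact_mod_cast abs_digit_sub_digit_add_two_pow_mul_of_odd s i hm
end

section
/- Let d ∈ ℓ^∞(ℤ) be limit-periodic. Then there exist a set {n_j}_{j≥1} of positive integers with n_j | n_{j+1} for every j, and n_j-periodic sequences p_j ∈ ℓ^∞(ℤ), such that d(k) = Σ_{j=1}^∞ p_j(k) with uniform convergence of the series. -/
lemma per_mul (p : ℤ → ℝ) (m : ℕ) (h : ∀ k : ℤ, p (k + m) = p k) (c : ℕ) :
    ∀ k : ℤ, p (k + (m * c : ℕ)) = p k := by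
  induction c with
  | zero => simp
  | succ c ih =>
    intro k
    have : (k + ((m * (c + 1) : ℕ) : ℤ)) = (k + (m * c : ℕ)) + m := by push_cast; ring
    rw [this, h, ih]

lemma per_dvd (p : ℤ → ℝ) (m n : ℕ) (hmn : m ∣ n) (h : ∀ k : ℤ, p (k + m) = p k) :
    ∀ k : ℤ, p (k + n) = p k := by
  obtain ⟨c, rfl⟩ := hmn
  exact per_mul p m h c

/-- Every limit-periodic sequence `d` admits an expansion `d = Σ_j p_j` with `p_j`
`n_j`-periodic, `n_j | n_{j+1}`, and uniform convergence of the series. -/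
theorem stmt16 (d : ℤ → ℝ)
    (hlp : ∀ ε > (0 : ℝ), ∃ p : ℤ → ℝ, ∃ n : ℕ, 0 < n ∧
      (∀ k : ℤ, p (k + n) = p k) ∧ ∀ k : ℤ, |d k - p k| ≤ ε) :
    ∃ n : ℕ → ℕ, ∃ p : ℕ → ℤ → ℝ,
      (∀ j, 0 < n j) ∧ (∀ j, n j ∣ n (j + 1)) ∧
      (∀ j, ∀ k : ℤ, p j (k + (n j : ℤ)) = p j k) ∧
      TendstoUniformly (fun N : ℕ => fun k : ℤ => ∑ j ∈ Finset.range N, p j k) d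
        Filter.atTop := by
  have hpos : ∀ j : ℕ, (0:ℝ) < (1/2)^j := fun j => by positivity
  choose q m hm hper hbound using fun j : ℕ => hlp ((1/2)^j) (hpos j)
  set n : ℕ → ℕ := fun j => ∏ i ∈ Finset.range (j+1), m i with hn
  have hnpos : ∀ j, 0 < n j := fun j => Finset.prod_pos (fun i _ => hm i)
  have hdvd : ∀ j, n j ∣ n (j+1) := by
    intro j
    refine ⟨m (j+1), ?_⟩
    simp [hn, Finset.prod_range_succ]
  have hmdvd : ∀ j, m j ∣ n j := fun j =>
    Finset.dvd_prod_of_mem m (Finset.self_mem_range_succ j)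
  set p : ℕ → ℤ → ℝ := fun j => match j with
    | 0 => q 0
    | j+1 => fun k => q (j+1) k - q j k with hp
  have hpper : ∀ j, ∀ k : ℤ, p j (k + (n j : ℤ)) = p j k := by
    intro j k
    match j with
    | 0 => exact per_dvd (q 0) (m 0) (n 0) (hmdvd 0) (hper 0) k
    | j+1 =>
      have h1 := per_dvd (q (j+1)) (m (j+1)) (n (j+1)) (hmdvd (j+1)) (hper (j+1)) k
      have h2 := per_dvd (q j) (m j) (n (j+1)) ((hmdvd j).trans (hdvd j)) (hper j) k
      simp only [hp]
      rw [h1, h2]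
  have hsum : ∀ N : ℕ, ∀ k : ℤ, ∑ j ∈ Finset.range (N+1), p j k = q N k := by
    intro N
    induction N with
    | zero => intro k; simp [hp]
    | succ N ih =>
      intro k
      rw [Finset.sum_range_succ, ih k]
      simp [hp]
  refine ⟨n, p, hnpos, hdvd, hpper, ?_⟩
  rw [Metric.tendstoUniformly_iff]
  intro ε hε
  obtain ⟨J, hJ⟩ := exists_pow_lt_of_lt_one hε (by norm_num : (1:ℝ)/2 < 1)
  filter_upwards [Filter.eventually_ge_atTop (J+1)] with N hN k
  obtain ⟨M, rfl⟩ : ∃ M, N = M + 1 := ⟨N - 1, by omega⟩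
  rw [hsum M k, Real.dist_eq]
  have h1 : |d k - q M k| ≤ (1/2)^M := hbound M k
  have h2 : ((1:ℝ)/2)^M ≤ (1/2)^J :=
    pow_le_pow_of_le_one (by norm_num) (by norm_num) (by omega)
  linarith
end
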